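/- Let g^{ij}(u) be a symmetric invertible matrix with inverse g_{ij}, with Levi-Civita Christoffel symbols Γ^j_{sk}, and set Γ^{ij}_k = −g^{is} Γ^j_{sk}. Let ω^{ij} be skew-symmetric and define ∇_k ω^{ij} = ω^{ij}_{,k} + Γ^i_{ks} ω^{sj} + Γ^j_{ks} ω^{is} and ∇^i = g^{is} ∇_s. If ∇^i ω^{jk} + ∇^j ω^{ik} = 0 for all i, j, k, then ∇_s ∇_k ω^{ij} = 0 for all i, j, k, s, provided the metric g is flat (vanishing Riemann curvature). -/

import Mathlib

open scoped BigOperators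

noncomputable def pd {n : ℕ} (s : Fin n) (f : (Fin n → ℝ) → ℝ) (u : Fin n → ℝ) : ℝ :=
  fderiv ℝ f u (Pi.single s 1)

/-- Christoffel symbols `Γ^k_{ij} = (1/2) g^{kl}(g_{li,j} + g_{lj,i} − g_{ij,l})`. -/
noncomputable def christoffel {n : ℕ} (gup glow : (Fin n → ℝ) → Fin n → Fin n → ℝ)
    (u : Fin n → ℝ) (k i j : Fin n) : ℝ :=
  (1/2) * ∑ l, gup u k l *
    (pd j (fun v => glow v l i) u + pd i (fun v => glow v l j) u - pd l (fun v => glow v i j) u)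

/-- Covariant derivative of the `(2,0)`-tensor `ω`:
`∇_k ω^{ij} = ω^{ij}_{,k} + Γ^i_{ks} ω^{sj} + Γ^j_{ks} ω^{is}`. -/
noncomputable def covOmega {n : ℕ} (gup glow ω : (Fin n → ℝ) → Fin n → Fin n → ℝ)
    (u : Fin n → ℝ) (k i j : Fin n) : ℝ :=
  pd k (fun v => ω v i j) u
    + ∑ s, christoffel gup glow u i k s * ω u s j
    + ∑ s, christoffel gup glow u j k s * ω u i s

/-- Second covariant derivative of `ω`, i.e. `∇_s` applied to the `(2,1)`-tensor
`T^{ij}_k = ∇_k ω^{ij}`. -/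
noncomputable def covCovOmega {n : ℕ} (gup glow ω : (Fin n → ℝ) → Fin n → Fin n → ℝ)
    (u : Fin n → ℝ) (s k i j : Fin n) : ℝ :=
  pd s (fun v => covOmega gup glow ω v k i j) u
    + ∑ l, christoffel gup glow u i s l * covOmega gup glow ω u k l j
    + ∑ l, christoffel gup glow u j s l * covOmega gup glow ω u k i l
    - ∑ l, christoffel gup glow u l s k * covOmega gup glow ω u l i j

local notation "∞E" => ((⊤:ℕ∞) : WithTop ℕ∞)

variable {n : ℕ} {U : Set (Fin n → ℝ)} {gup glow ω : (Fin n → ℝ) → Fin n → Fin n → ℝ}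

/-! ### pd toolbox -/

lemma pd_congr (hU : IsOpen U) {u : Fin n → ℝ} (hu : u ∈ U) {f g : (Fin n → ℝ) → ℝ}
    (h : ∀ v ∈ U, f v = g v) (s : Fin n) : pd s f u = pd s g u := by
  unfold pd
  rw [Filter.EventuallyEq.fderiv_eq]
  filter_upwards [hU.mem_nhds hu] with v hv using h v hv

lemma pd_add {f g : (Fin n → ℝ) → ℝ} {u : Fin n → ℝ} (hf : DifferentiableAt ℝ f u)
    (hg : DifferentiableAt ℝ g u) (s : Fin n) :
    pd s (fun v => f v + g v) u = pd s f u + pd s g u := by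
  unfold pd; rw [fderiv_fun_add hf hg]; rfl

lemma pd_sub {f g : (Fin n → ℝ) → ℝ} {u : Fin n → ℝ} (hf : DifferentiableAt ℝ f u)
    (hg : DifferentiableAt ℝ g u) (s : Fin n) :
    pd s (fun v => f v - g v) u = pd s f u - pd s g u := by
  unfold pd; rw [fderiv_fun_sub hf hg]; rfl

lemma pd_mul {f g : (Fin n → ℝ) → ℝ} {u : Fin n → ℝ} (hf : DifferentiableAt ℝ f u)
    (hg : DifferentiableAt ℝ g u) (s : Fin n) :
    pd s (fun v => f v * g v) u = pd s f u * g u + f u * pd s g u := by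
  unfold pd; rw [fderiv_fun_mul hf hg]; simp [mul_comm]; ring

lemma pd_sum {ι : Type*} (t : Finset ι) {f : ι → (Fin n → ℝ) → ℝ} {u : Fin n → ℝ}
    (hf : ∀ i ∈ t, DifferentiableAt ℝ (f i) u) (s : Fin n) :
    pd s (fun v => ∑ i ∈ t, f i v) u = ∑ i ∈ t, pd s (f i) u := by
  unfold pd; rw [fderiv_fun_sum hf]; simp

lemma pd_const {u : Fin n → ℝ} (c : ℝ) (s : Fin n) : pd s (fun _ => c) u = 0 := by
  unfold pd; simp

lemma contDiffOn_pd (hU : IsOpen U) {f : (Fin n → ℝ) → ℝ}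
    (hf : ContDiffOn ℝ ∞E f U) (s : Fin n) :
    ContDiffOn ℝ ∞E (fun v => pd s f v) U := by
  have h := hf.fderiv_of_isOpen (m := ∞E) hU le_rfl
  exact (ContinuousLinearMap.apply ℝ ℝ (Pi.single s 1)).contDiff.comp_contDiffOn h

lemma diffAt (hU : IsOpen U) {f : (Fin n → ℝ) → ℝ} (hf : ContDiffOn ℝ ∞E f U)
    {u : Fin n → ℝ} (hu : u ∈ U) : DifferentiableAt ℝ f u :=
  ((hf.differentiableOn (by simp)).differentiableAt
    (hU.mem_nhds hu))

lemma pd_comm (hU : IsOpen U) {u : Fin n → ℝ} (hu : u ∈ U) {f : (Fin n → ℝ) → ℝ}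
    (hf : ContDiffOn ℝ ∞E f U) (s k : Fin n) :
    pd s (fun v => pd k f v) u = pd k (fun v => pd s f v) u := by
  have hC : ContDiffAt ℝ ∞E f u := hf.contDiffAt (hU.mem_nhds hu)
  have hsymm := hC.isSymmSndFDerivAt (by rw [minSmoothness_of_isRCLikeNormedField]; exact WithTop.coe_le_coe.2 (le_top : (2:ℕ∞) ≤ ⊤))
  have hdf : DifferentiableAt ℝ (fderiv ℝ f) u := by
    have := (hf.fderiv_of_isOpen (m := ∞E) hU le_rfl).differentiableOn
      (by simp)
    exact this.differentiableAt (hU.mem_nhds hu)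
  have key : ∀ a b : Fin n,
      pd a (fun v => pd b f v) u
        = fderiv ℝ (fderiv ℝ f) u (Pi.single a 1) (Pi.single b 1) := by
    intro a b
    have h2 := fderiv_clm_apply (c := fderiv ℝ f) (u := fun _ => Pi.single b (1:ℝ)) hdf
      (differentiableAt_const _)
    unfold pd
    rw [h2]
    simp
  rw [key s k, key k s, hsymm]

/-! ### smoothness -/

lemma christoffel_contDiffOn (hU : IsOpen U)
    (hglow : ∀ i j, ContDiffOn ℝ ∞E (fun u => glow u i j) U)
    (hgup : ∀ i j, ContDiffOn ℝ ∞E (fun u => gup u i j) U) (k i j : Fin n) :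
    ContDiffOn ℝ ∞E (fun u => christoffel gup glow u k i j) U := by
  unfold christoffel
  apply ContDiffOn.mul contDiffOn_const
  apply ContDiffOn.sum
  intro l _
  exact (hgup k l).mul (((contDiffOn_pd hU (hglow l i) j).add
    (contDiffOn_pd hU (hglow l j) i)).sub (contDiffOn_pd hU (hglow i j) l))

lemma covOmega_contDiffOn (hU : IsOpen U)
    (hglow : ∀ i j, ContDiffOn ℝ ∞E (fun u => glow u i j) U)
    (hgup : ∀ i j, ContDiffOn ℝ ∞E (fun u => gup u i j) U)
    (hω : ∀ i j, ContDiffOn ℝ ∞E (fun u => ω u i j) U) (k i j : Fin n) :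
    ContDiffOn ℝ ∞E (fun u => covOmega gup glow ω u k i j) U := by
  unfold covOmega
  apply ContDiffOn.add
  apply ContDiffOn.add
  · exact contDiffOn_pd hU (hω i j) k
  · exact ContDiffOn.sum fun s _ =>
      (christoffel_contDiffOn hU hglow hgup i k s).mul (hω s j)
  · exact ContDiffOn.sum fun s _ =>
      (christoffel_contDiffOn hU hglow hgup j k s).mul (hω i s)

/-! ### pointwise identities -/

lemma pd_glow_symm (hU : IsOpen U) (hsym : ∀ u ∈ U, ∀ i j, glow u i j = glow u j i)
    {u : Fin n → ℝ} (hu : u ∈ U) (l b c : Fin n) :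
    pd l (fun v => glow v b c) u = pd l (fun v => glow v c b) u :=
  pd_congr hU hu (fun v hv => hsym v hv b c) l

lemma christoffel_symm (hU : IsOpen U) (hsym : ∀ u ∈ U, ∀ i j, glow u i j = glow u j i)
    {u : Fin n → ℝ} (hu : u ∈ U) (a b c : Fin n) :
    christoffel gup glow u a b c = christoffel gup glow u a c b := by
  unfold christoffel
  congr 1
  refine Finset.sum_congr rfl fun l _ => ?_
  rw [pd_glow_symm hU hsym hu l b c]
  ring

lemma contract_lu (hsym : ∀ u ∈ U, ∀ i j, glow u i j = glow u j i)
    (hinv' : ∀ u ∈ U, ∀ i j, ∑ s, glow u i s * gup u s j = if i = j then (1:ℝ) else 0)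
    {u : Fin n → ℝ} (hu : u ∈ U) (j p : Fin n) :
    ∑ m, glow u m j * gup u m p = if j = p then (1:ℝ) else 0 := by
  rw [← hinv' u hu j p]
  exact Finset.sum_congr rfl fun m _ => by rw [hsym u hu m j]

lemma sum_christoffel_mul_glow (hU : IsOpen U)
    (hsym : ∀ u ∈ U, ∀ i j, glow u i j = glow u j i)
    (hinv' : ∀ u ∈ U, ∀ i j, ∑ s, glow u i s * gup u s j = if i = j then (1:ℝ) else 0)
    {u : Fin n → ℝ} (hu : u ∈ U) (l i j : Fin n) :
    ∑ m, christoffel gup glow u m l i * glow u m j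
      = (1/2) * (pd i (fun v => glow v j l) u + pd l (fun v => glow v j i) u
          - pd j (fun v => glow v l i) u) := by
  unfold christoffel
  calc ∑ m, ((1/2) * ∑ p, gup u m p *
        (pd i (fun v => glow v p l) u + pd l (fun v => glow v p i) u
          - pd p (fun v => glow v l i) u)) * glow u m j
      = ∑ m, ∑ p, (1/2) * ((glow u m j * gup u m p) *
          (pd i (fun v => glow v p l) u + pd l (fun v => glow v p i) u
            - pd p (fun v => glow v l i) u)) := by
        refine Finset.sum_congr rfl fun m _ => ?_
        rw [Finset.mul_sum, Finset.sum_mul]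
        exact Finset.sum_congr rfl fun p _ => by ring
    _ = ∑ p, ∑ m, (1/2) * ((glow u m j * gup u m p) *
          (pd i (fun v => glow v p l) u + pd l (fun v => glow v p i) u
            - pd p (fun v => glow v l i) u)) := Finset.sum_comm
    _ = ∑ p, (1/2) * ((∑ m, glow u m j * gup u m p) *
          (pd i (fun v => glow v p l) u + pd l (fun v => glow v p i) u
            - pd p (fun v => glow v l i) u)) := by
        refine Finset.sum_congr rfl fun p _ => ?_
        rw [Finset.sum_mul, Finset.mul_sum]
    _ = ∑ p, (1/2) * ((if j = p then (1:ℝ) else 0) *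
          (pd i (fun v => glow v p l) u + pd l (fun v => glow v p i) u
            - pd p (fun v => glow v l i) u)) := by
        refine Finset.sum_congr rfl fun p _ => ?_
        rw [contract_lu hsym hinv' hu j p]
    _ = (1/2) * (pd i (fun v => glow v j l) u + pd l (fun v => glow v j i) u
          - pd j (fun v => glow v l i) u) := by
        simp

lemma compat_low (hU : IsOpen U)
    (hsym : ∀ u ∈ U, ∀ i j, glow u i j = glow u j i)
    (hinv' : ∀ u ∈ U, ∀ i j, ∑ s, glow u i s * gup u s j = if i = j then (1:ℝ) else 0)
    {u : Fin n → ℝ} (hu : u ∈ U) (l i j : Fin n) :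
    pd l (fun v => glow v i j) u
      = ∑ m, christoffel gup glow u m l i * glow u m j
        + ∑ m, christoffel gup glow u m l j * glow u i m := by
  have h2 : ∑ m, christoffel gup glow u m l j * glow u i m
      = ∑ m, christoffel gup glow u m l j * glow u m i :=
    Finset.sum_congr rfl fun m _ => by rw [hsym u hu i m]
  rw [sum_christoffel_mul_glow hU hsym hinv' hu l i j, h2,
    sum_christoffel_mul_glow hU hsym hinv' hu l j i,
    pd_glow_symm hU hsym hu i j l, pd_glow_symm hU hsym hu l j i,
    pd_glow_symm hU hsym hu j i l, pd_glow_symm hU hsym hu l i j,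
    pd_glow_symm hU hsym hu i l j, pd_glow_symm hU hsym hu j l i]
  ring
lemma compat_up (hU : IsOpen U)
    (hglow : ∀ i j, ContDiffOn ℝ ∞E (fun u => glow u i j) U)
    (hgup : ∀ i j, ContDiffOn ℝ ∞E (fun u => gup u i j) U)
    (hsym : ∀ u ∈ U, ∀ i j, glow u i j = glow u j i)
    (hinv : ∀ u ∈ U, ∀ i j, ∑ s, gup u i s * glow u s j = if i = j then (1:ℝ) else 0)
    (hinv' : ∀ u ∈ U, ∀ i j, ∑ s, glow u i s * gup u s j = if i = j then (1:ℝ) else 0)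
    {u : Fin n → ℝ} (hu : u ∈ U) (l i p : Fin n) :
    pd l (fun v => gup v i p) u
      = - ∑ m, christoffel gup glow u i l m * gup u m p
        - ∑ m, gup u i m * christoffel gup glow u p l m := by
  -- step 1 : differentiate the inverse relation
  have hA : ∀ j, ∑ s, pd l (fun v => gup v i s) u * glow u s j
      = - ∑ s, gup u i s * pd l (fun v => glow v s j) u := by
    intro j
    have hz : pd l (fun v => ∑ s, gup v i s * glow v s j) u = 0 := by
      rw [pd_congr hU hu (g := fun _ => if i = j then (1:ℝ) else 0)
        (fun v hv => hinv v hv i j) l, pd_const]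
    rw [pd_sum Finset.univ (fun s _ =>
      ((diffAt hU (hgup i s) hu).fun_mul (diffAt hU (hglow s j) hu))) l] at hz
    have hz2 : ∑ s, (pd l (fun v => gup v i s) u * glow u s j
        + gup u i s * pd l (fun v => glow v s j) u) = 0 := by
      rw [← hz]
      exact Finset.sum_congr rfl fun s _ =>
        (pd_mul (diffAt hU (hgup i s) hu) (diffAt hU (hglow s j) hu) l).symm
    rw [Finset.sum_add_distrib] at hz2
    linarith
  -- step 2 : recover pd of gup by contracting with gup
  have key : pd l (fun v => gup v i p) u
      = ∑ j, (∑ s, pd l (fun v => gup v i s) u * glow u s j) * gup u j p := by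
    calc pd l (fun v => gup v i p) u
        = ∑ s, pd l (fun v => gup v i s) u * (if s = p then (1:ℝ) else 0) := by simp
      _ = ∑ s, pd l (fun v => gup v i s) u * (∑ j, glow u s j * gup u j p) := by
          refine Finset.sum_congr rfl fun s _ => ?_; rw [hinv' u hu s p]
      _ = ∑ s, ∑ j, pd l (fun v => gup v i s) u * glow u s j * gup u j p := by
          refine Finset.sum_congr rfl fun s _ => ?_
          rw [Finset.mul_sum]
          exact Finset.sum_congr rfl fun j _ => by ring
      _ = ∑ j, ∑ s, pd l (fun v => gup v i s) u * glow u s j * gup u j p := Finset.sum_comm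
      _ = ∑ j, (∑ s, pd l (fun v => gup v i s) u * glow u s j) * gup u j p := by
          refine Finset.sum_congr rfl fun j _ => ?_
          rw [Finset.sum_mul]
  have key2 : ∀ j : Fin n, (∑ s, pd l (fun v => gup v i s) u * glow u s j) * gup u j p
      = - ∑ s, ∑ m, gup u i s * christoffel gup glow u m l s * glow u m j * gup u j p
        - ∑ s, ∑ m, gup u i s * christoffel gup glow u m l j * glow u s m * gup u j p := by
    intro j
    rw [hA j]
    have h3 : ∑ s, gup u i s * pd l (fun v => glow v s j) u
        = ∑ s, (∑ m, gup u i s * christoffel gup glow u m l s * glow u m j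
            + ∑ m, gup u i s * christoffel gup glow u m l j * glow u s m) := by
      refine Finset.sum_congr rfl fun s _ => ?_
      rw [compat_low hU hsym hinv' hu l s j, mul_add, Finset.mul_sum, Finset.mul_sum]
      congr 1
      · exact Finset.sum_congr rfl fun m _ => by ring
      · exact Finset.sum_congr rfl fun m _ => by ring
    rw [h3, Finset.sum_add_distrib, neg_add, add_mul, neg_mul, neg_mul, Finset.sum_mul,
      Finset.sum_mul, sub_eq_add_neg]
    congr 2
    · exact Finset.sum_congr rfl fun s _ => by rw [Finset.sum_mul]
    · exact Finset.sum_congr rfl fun s _ => by rw [Finset.sum_mul]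
  have e1 : ∑ j, ∑ s, ∑ m,
      gup u i s * christoffel gup glow u m l s * glow u m j * gup u j p
      = ∑ m, gup u i m * christoffel gup glow u p l m := by
    calc ∑ j, ∑ s, ∑ m, gup u i s * christoffel gup glow u m l s * glow u m j * gup u j p
        = ∑ s, ∑ m, ∑ j, gup u i s * christoffel gup glow u m l s * glow u m j * gup u j p := by
          rw [Finset.sum_comm]
          exact Finset.sum_congr rfl fun s _ => Finset.sum_comm
      _ = ∑ s, ∑ m, gup u i s * christoffel gup glow u m l s *
            (if m = p then (1:ℝ) else 0) := by
          refine Finset.sum_congr rfl fun s _ => Finset.sum_congr rfl fun m _ => ?_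
          calc ∑ j, gup u i s * christoffel gup glow u m l s * glow u m j * gup u j p
              = gup u i s * christoffel gup glow u m l s
                  * ∑ j, glow u m j * gup u j p := by
                rw [Finset.mul_sum]
                exact Finset.sum_congr rfl fun j _ => by ring
            _ = _ := by rw [hinv' u hu m p]
      _ = ∑ m, gup u i m * christoffel gup glow u p l m := by simp
  have e2 : ∑ j, ∑ s, ∑ m,
      gup u i s * christoffel gup glow u m l j * glow u s m * gup u j p
      = ∑ m, christoffel gup glow u i l m * gup u m p := by
    calc ∑ j, ∑ s, ∑ m, gup u i s * christoffel gup glow u m l j * glow u s m * gup u j p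
        = ∑ j, ∑ m, ∑ s, gup u i s * christoffel gup glow u m l j * glow u s m * gup u j p :=
          Finset.sum_congr rfl fun j _ => Finset.sum_comm
      _ = ∑ j, ∑ m, (if i = m then (1:ℝ) else 0) *
            (christoffel gup glow u m l j * gup u j p) := by
          refine Finset.sum_congr rfl fun j _ => Finset.sum_congr rfl fun m _ => ?_
          calc ∑ s, gup u i s * christoffel gup glow u m l j * glow u s m * gup u j p
              = (∑ s, gup u i s * glow u s m) * (christoffel gup glow u m l j * gup u j p) := by
                rw [Finset.sum_mul]
                exact Finset.sum_congr rfl fun s _ => by ring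
            _ = _ := by rw [hinv u hu i m]
      _ = ∑ j, christoffel gup glow u i l j * gup u j p := by simp
      _ = ∑ m, christoffel gup glow u i l m * gup u m p := rfl
  have := key
  rw [Finset.sum_congr rfl (fun j _ => key2 j)] at this
  rw [Finset.sum_sub_distrib, Finset.sum_neg_distrib, e2] at this
  rw [e1] at this
  rw [this]
  ring
lemma pd_neg {f : (Fin n → ℝ) → ℝ} {u : Fin n → ℝ} (s : Fin n) :
    pd s (fun v => -f v) u = - pd s f u := by
  unfold pd; rw [fderiv_fun_neg]; simp

lemma covOmega_skew (hU : IsOpen U)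
    (hskew : ∀ u ∈ U, ∀ i j, ω u i j = - ω u j i)
    {u : Fin n → ℝ} (hu : u ∈ U) (k i j : Fin n) :
    covOmega gup glow ω u k i j = - covOmega gup glow ω u k j i := by
  unfold covOmega
  have h1 : pd k (fun v => ω v j i) u = - pd k (fun v => ω v i j) u := by
    rw [pd_congr hU hu (g := fun v => - ω v i j) (fun v hv => hskew v hv j i) k, pd_neg]
  have h2 : ∑ l, christoffel gup glow u j k l * ω u l i
      = - ∑ l, christoffel gup glow u j k l * ω u i l := by
    rw [← Finset.sum_neg_distrib]
    refine Finset.sum_congr rfl fun l _ => ?_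
    rw [hskew u hu l i]; ring
  have h3 : ∑ l, christoffel gup glow u i k l * ω u j l
      = - ∑ l, christoffel gup glow u i k l * ω u l j := by
    rw [← Finset.sum_neg_distrib]
    refine Finset.sum_congr rfl fun l _ => ?_
    rw [hskew u hu j l]; ring
  rw [h1, h2, h3]
  ring

lemma pd_covOmega (hU : IsOpen U)
    (hglow : ∀ i j, ContDiffOn ℝ ∞E (fun u => glow u i j) U)
    (hgup : ∀ i j, ContDiffOn ℝ ∞E (fun u => gup u i j) U)
    (hω : ∀ i j, ContDiffOn ℝ ∞E (fun u => ω u i j) U)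
    {u : Fin n → ℝ} (hu : u ∈ U) (s k i j : Fin n) :
    pd s (fun v => covOmega gup glow ω v k i j) u =
      pd s (fun v => pd k (fun w => ω w i j) v) u
      + ∑ l, (pd s (fun v => christoffel gup glow v i k l) u * ω u l j
          + christoffel gup glow u i k l * pd s (fun v => ω v l j) u)
      + ∑ l, (pd s (fun v => christoffel gup glow v j k l) u * ω u i l
          + christoffel gup glow u j k l * pd s (fun v => ω v i l) u) := by
  have d1 : DifferentiableAt ℝ (fun v => pd k (fun w => ω w i j) v) u :=
    diffAt hU (contDiffOn_pd hU (hω i j) k) hu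
  have d2 : DifferentiableAt ℝ (fun v => ∑ l, christoffel gup glow v i k l * ω v l j) u := by
    apply DifferentiableAt.fun_sum
    exact fun l _ => (diffAt hU (christoffel_contDiffOn hU hglow hgup i k l) hu).mul
      (diffAt hU (hω l j) hu)
  have d3 : DifferentiableAt ℝ (fun v => ∑ l, christoffel gup glow v j k l * ω v i l) u := by
    apply DifferentiableAt.fun_sum
    exact fun l _ => (diffAt hU (christoffel_contDiffOn hU hglow hgup j k l) hu).mul
      (diffAt hU (hω i l) hu)
  unfold covOmega
  rw [pd_add (f := fun v => pd k (fun w => ω w i j) v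
      + ∑ l, christoffel gup glow v i k l * ω v l j)
    (g := fun v => ∑ l, christoffel gup glow v j k l * ω v i l) (d1.add d2) d3 s]
  rw [pd_add (f := fun v => pd k (fun w => ω w i j) v)
    (g := fun v => ∑ l, christoffel gup glow v i k l * ω v l j) d1 d2 s]
  rw [pd_sum Finset.univ (fun l _ =>
    (diffAt hU (christoffel_contDiffOn hU hglow hgup i k l) hu).fun_mul
      (diffAt hU (hω l j) hu)) s]
  rw [pd_sum Finset.univ (fun l _ =>
    (diffAt hU (christoffel_contDiffOn hU hglow hgup j k l) hu).fun_mul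
      (diffAt hU (hω i l) hu)) s]
  congr 1
  · congr 1
    exact Finset.sum_congr rfl fun l _ =>
      pd_mul (diffAt hU (christoffel_contDiffOn hU hglow hgup i k l) hu)
        (diffAt hU (hω l j) hu) s
  · exact Finset.sum_congr rfl fun l _ =>
      pd_mul (diffAt hU (christoffel_contDiffOn hU hglow hgup j k l) hu)
        (diffAt hU (hω i l) hu) s

lemma sum_sum_antisymm (F : Fin n → Fin n → ℝ) (h : ∀ l m, F l m = - F m l) :
    ∑ l, ∑ m, F l m = (0:ℝ) := by
  have hTS : ∑ l, ∑ m, F m l = ∑ l, ∑ m, F l m := Finset.sum_comm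
  have hsum : (∑ l, ∑ m, F l m) + (∑ l, ∑ m, F m l) = 0 := by
    rw [← Finset.sum_add_distrib]
    simp only [← Finset.sum_add_distrib]
    apply Finset.sum_eq_zero; intro l _
    apply Finset.sum_eq_zero; intro m _
    rw [h l m]; ring
  linarith
lemma ricci (hU : IsOpen U)
    (hglow : ∀ i j, ContDiffOn ℝ ∞E (fun u => glow u i j) U)
    (hgup : ∀ i j, ContDiffOn ℝ ∞E (fun u => gup u i j) U)
    (hω : ∀ i j, ContDiffOn ℝ ∞E (fun u => ω u i j) U)
    (hsym : ∀ u ∈ U, ∀ i j, glow u i j = glow u j i)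
    (hflat : ∀ u ∈ U, ∀ l i j k : Fin n,
      pd j (fun v => christoffel gup glow v l i k) u
        - pd k (fun v => christoffel gup glow v l i j) u
        + ∑ s, (christoffel gup glow u l j s * christoffel gup glow u s i k
              - christoffel gup glow u l k s * christoffel gup glow u s i j) = 0)
    {u : Fin n → ℝ} (hu : u ∈ U) (s k i j : Fin n) :
    covCovOmega gup glow ω u s k i j = covCovOmega gup glow ω u k s i j := by
  have hexp2 : ∀ a b : Fin n, covCovOmega gup glow ω u a b i j =
      pd a (fun v => pd b (fun w => ω w i j) v) u
      + ∑ l, pd a (fun v => christoffel gup glow v i b l) u * ω u l j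
      + ∑ l, christoffel gup glow u i b l * pd a (fun v => ω v l j) u
      + ∑ l, pd a (fun v => christoffel gup glow v j b l) u * ω u i l
      + ∑ l, christoffel gup glow u j b l * pd a (fun v => ω v i l) u
      + ∑ l, christoffel gup glow u i a l * pd b (fun v => ω v l j) u
      + ∑ l, (∑ m, christoffel gup glow u i a m * christoffel gup glow u m b l) * ω u l j
      + ∑ l, ∑ m, christoffel gup glow u i a l * (christoffel gup glow u j b m * ω u l m)
      + ∑ l, christoffel gup glow u j a l * pd b (fun v => ω v i l) u
      + ∑ l, ∑ m, christoffel gup glow u j a l * (christoffel gup glow u i b m * ω u m l)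
      + ∑ l, (∑ m, christoffel gup glow u j a m * christoffel gup glow u m b l) * ω u i l
      - ∑ l, christoffel gup glow u l a b * covOmega gup glow ω u l i j := by
    intro a b
    have m1 : ∑ l, christoffel gup glow u i a l * covOmega gup glow ω u b l j
        = ∑ l, christoffel gup glow u i a l * pd b (fun v => ω v l j) u
          + ∑ l, (∑ m, christoffel gup glow u i a m * christoffel gup glow u m b l) * ω u l j
          + ∑ l, ∑ m, christoffel gup glow u i a l *
              (christoffel gup glow u j b m * ω u l m) := by
      calc ∑ l, christoffel gup glow u i a l * covOmega gup glow ω u b l j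
          = ∑ l, (christoffel gup glow u i a l * pd b (fun v => ω v l j) u
              + ∑ m, christoffel gup glow u i a l * (christoffel gup glow u l b m * ω u m j)
              + ∑ m, christoffel gup glow u i a l *
                  (christoffel gup glow u j b m * ω u l m)) := by
            refine Finset.sum_congr rfl fun l _ => ?_
            unfold covOmega
            rw [mul_add, mul_add, Finset.mul_sum, Finset.mul_sum]
        _ = ∑ l, christoffel gup glow u i a l * pd b (fun v => ω v l j) u
            + ∑ l, ∑ m, christoffel gup glow u i a l *
                (christoffel gup glow u l b m * ω u m j)
            + ∑ l, ∑ m, christoffel gup glow u i a l *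
                (christoffel gup glow u j b m * ω u l m) := by
            rw [Finset.sum_add_distrib, Finset.sum_add_distrib]
        _ = _ := by
            congr 1
            congr 1
            calc ∑ l, ∑ m, christoffel gup glow u i a l *
                  (christoffel gup glow u l b m * ω u m j)
                = ∑ m, ∑ l, christoffel gup glow u i a l *
                    (christoffel gup glow u l b m * ω u m j) := Finset.sum_comm
              _ = ∑ m, (∑ l, christoffel gup glow u i a l * christoffel gup glow u l b m)
                    * ω u m j := by
                  refine Finset.sum_congr rfl fun m _ => ?_
                  rw [Finset.sum_mul]
                  exact Finset.sum_congr rfl fun l _ => by ring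
    have m2 : ∑ l, christoffel gup glow u j a l * covOmega gup glow ω u b i l
        = ∑ l, christoffel gup glow u j a l * pd b (fun v => ω v i l) u
          + ∑ l, ∑ m, christoffel gup glow u j a l *
              (christoffel gup glow u i b m * ω u m l)
          + ∑ l, (∑ m, christoffel gup glow u j a m * christoffel gup glow u m b l)
              * ω u i l := by
      calc ∑ l, christoffel gup glow u j a l * covOmega gup glow ω u b i l
          = ∑ l, (christoffel gup glow u j a l * pd b (fun v => ω v i l) u
              + ∑ m, christoffel gup glow u j a l * (christoffel gup glow u i b m * ω u m l)
              + ∑ m, christoffel gup glow u j a l *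
                  (christoffel gup glow u l b m * ω u i m)) := by
            refine Finset.sum_congr rfl fun l _ => ?_
            unfold covOmega
            rw [mul_add, mul_add, Finset.mul_sum, Finset.mul_sum]
        _ = ∑ l, christoffel gup glow u j a l * pd b (fun v => ω v i l) u
            + ∑ l, ∑ m, christoffel gup glow u j a l *
                (christoffel gup glow u i b m * ω u m l)
            + ∑ l, ∑ m, christoffel gup glow u j a l *
                (christoffel gup glow u l b m * ω u i m) := by
            rw [Finset.sum_add_distrib, Finset.sum_add_distrib]
        _ = _ := by
            congr 1
            calc ∑ l, ∑ m, christoffel gup glow u j a l *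
                  (christoffel gup glow u l b m * ω u i m)
                = ∑ m, ∑ l, christoffel gup glow u j a l *
                    (christoffel gup glow u l b m * ω u i m) := Finset.sum_comm
              _ = ∑ m, (∑ l, christoffel gup glow u j a l * christoffel gup glow u l b m)
                    * ω u i m := by
                  refine Finset.sum_congr rfl fun m _ => ?_
                  rw [Finset.sum_mul]
                  exact Finset.sum_congr rfl fun l _ => by ring
    unfold covCovOmega
    rw [pd_covOmega hU hglow hgup hω hu a b i j, m1, m2, Finset.sum_add_distrib,
      Finset.sum_add_distrib]
    ring
  -- the individual exchange identities
  have h1 : pd s (fun v => pd k (fun w => ω w i j) v) u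
      = pd k (fun v => pd s (fun w => ω w i j) v) u := pd_comm hU hu (hω i j) s k
  have hb : ∀ (c : Fin n) (l : Fin n),
      pd s (fun v => christoffel gup glow v c k l) u
        + ∑ m, christoffel gup glow u c s m * christoffel gup glow u m k l
      = pd k (fun v => christoffel gup glow v c s l) u
        + ∑ m, christoffel gup glow u c k m * christoffel gup glow u m s l := by
    intro c l
    have hf := hflat u hu c l s k
    have c1 : pd s (fun v => christoffel gup glow v c l k) u
        = pd s (fun v => christoffel gup glow v c k l) u :=
      pd_congr hU hu (fun v hv => christoffel_symm hU hsym hv c l k) s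
    have c2 : pd k (fun v => christoffel gup glow v c l s) u
        = pd k (fun v => christoffel gup glow v c s l) u :=
      pd_congr hU hu (fun v hv => christoffel_symm hU hsym hv c l s) k
    have c3 : ∑ m, (christoffel gup glow u c s m * christoffel gup glow u m l k
          - christoffel gup glow u c k m * christoffel gup glow u m l s)
        = ∑ m, christoffel gup glow u c s m * christoffel gup glow u m k l
          - ∑ m, christoffel gup glow u c k m * christoffel gup glow u m s l := by
      rw [Finset.sum_sub_distrib]
      congr 1
      · exact Finset.sum_congr rfl fun m _ => by
          rw [christoffel_symm hU hsym hu m l k]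
      · exact Finset.sum_congr rfl fun m _ => by
          rw [christoffel_symm hU hsym hu m l s]
    rw [c1, c2, c3] at hf
    linarith
  have h27 : ∑ l, pd s (fun v => christoffel gup glow v i k l) u * ω u l j
        + ∑ l, (∑ m, christoffel gup glow u i s m * christoffel gup glow u m k l) * ω u l j
      = ∑ l, pd k (fun v => christoffel gup glow v i s l) u * ω u l j
        + ∑ l, (∑ m, christoffel gup glow u i k m * christoffel gup glow u m s l)
            * ω u l j := by
    rw [← Finset.sum_add_distrib, ← Finset.sum_add_distrib]
    refine Finset.sum_congr rfl fun l _ => ?_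
    rw [← add_mul, ← add_mul, hb i l]
  have h411 : ∑ l, pd s (fun v => christoffel gup glow v j k l) u * ω u i l
        + ∑ l, (∑ m, christoffel gup glow u j s m * christoffel gup glow u m k l) * ω u i l
      = ∑ l, pd k (fun v => christoffel gup glow v j s l) u * ω u i l
        + ∑ l, (∑ m, christoffel gup glow u j k m * christoffel gup glow u m s l)
            * ω u i l := by
    rw [← Finset.sum_add_distrib, ← Finset.sum_add_distrib]
    refine Finset.sum_congr rfl fun l _ => ?_
    rw [← add_mul, ← add_mul, hb j l]
  have hDD : ∑ l, ∑ m, christoffel gup glow u i s l * (christoffel gup glow u j k m * ω u l m)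
        + ∑ l, ∑ m, christoffel gup glow u j s l * (christoffel gup glow u i k m * ω u m l)
      = ∑ l, ∑ m, christoffel gup glow u i k l * (christoffel gup glow u j s m * ω u l m)
        + ∑ l, ∑ m, christoffel gup glow u j k l *
            (christoffel gup glow u i s m * ω u m l) := by
    have h0 : ∑ l, ∑ m,
        (christoffel gup glow u i s l * (christoffel gup glow u j k m * ω u l m)
          + christoffel gup glow u j s l * (christoffel gup glow u i k m * ω u m l)
          - (christoffel gup glow u i k l * (christoffel gup glow u j s m * ω u l m)
            + christoffel gup glow u j k l * (christoffel gup glow u i s m * ω u m l)))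
        = (0:ℝ) := by
      apply sum_sum_antisymm
      intro l m
      ring
    simp only [Finset.sum_sub_distrib, Finset.sum_add_distrib] at h0
    linarith
  have h12 : ∑ l, christoffel gup glow u l s k * covOmega gup glow ω u l i j
      = ∑ l, christoffel gup glow u l k s * covOmega gup glow ω u l i j :=
    Finset.sum_congr rfl fun l _ => by rw [christoffel_symm hU hsym hu l s k]
  rw [hexp2 s k, hexp2 k s]
  linarith
lemma covCov_contract (hU : IsOpen U)
    (hglow : ∀ i j, ContDiffOn ℝ ∞E (fun u => glow u i j) U)
    (hgup : ∀ i j, ContDiffOn ℝ ∞E (fun u => gup u i j) U)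
    (hω : ∀ i j, ContDiffOn ℝ ∞E (fun u => ω u i j) U)
    (hsym : ∀ u ∈ U, ∀ i j, glow u i j = glow u j i)
    (hinv : ∀ u ∈ U, ∀ i j, ∑ s, gup u i s * glow u s j = if i = j then (1:ℝ) else 0)
    (hinv' : ∀ u ∈ U, ∀ i j, ∑ s, glow u i s * gup u s j = if i = j then (1:ℝ) else 0)
    {u : Fin n → ℝ} (hu : u ∈ U) (l p q r : Fin n) :
    ∑ t, gup u p t * covCovOmega gup glow ω u l t q r
      = pd l (fun v => ∑ t, gup v p t * covOmega gup glow ω v t q r) u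
        + ∑ m, christoffel gup glow u p l m * ∑ t, gup u m t * covOmega gup glow ω u t q r
        + ∑ m, christoffel gup glow u q l m * ∑ t, gup u p t * covOmega gup glow ω u t m r
        + ∑ m, christoffel gup glow u r l m
            * ∑ t, gup u p t * covOmega gup glow ω u t q m := by
  have dCO : ∀ (t q' r' : Fin n), DifferentiableAt ℝ
      (fun v => covOmega gup glow ω v t q' r') u := fun t q' r' =>
    diffAt hU (covOmega_contDiffOn hU hglow hgup hω t q' r') hu
  have dgup : ∀ a b : Fin n, DifferentiableAt ℝ (fun v => gup v a b) u := fun a b =>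
    diffAt hU (hgup a b) hu
  have hpd : pd l (fun v => ∑ t, gup v p t * covOmega gup glow ω v t q r) u
      = ∑ t, (pd l (fun v => gup v p t) u * covOmega gup glow ω u t q r
          + gup u p t * pd l (fun v => covOmega gup glow ω v t q r) u) := by
    rw [pd_sum Finset.univ (fun t _ => (dgup p t).fun_mul (dCO t q r)) l]
    exact Finset.sum_congr rfl fun t _ => pd_mul (dgup p t) (dCO t q r) l
  have hpg : ∑ t, pd l (fun v => gup v p t) u * covOmega gup glow ω u t q r
      = - ∑ t, ∑ m, christoffel gup glow u p l m
            * (gup u m t * covOmega gup glow ω u t q r)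
        - ∑ t, ∑ m, gup u p t
            * (christoffel gup glow u m l t * covOmega gup glow ω u m q r) := by
    calc ∑ t, pd l (fun v => gup v p t) u * covOmega gup glow ω u t q r
        = ∑ t, ((- ∑ m, christoffel gup glow u p l m * gup u m t
            - ∑ m, gup u p m * christoffel gup glow u t l m)
              * covOmega gup glow ω u t q r) := by
          refine Finset.sum_congr rfl fun t _ => ?_
          rw [compat_up hU hglow hgup hsym hinv hinv' hu l p t]
      _ = ∑ t, (-(∑ m, christoffel gup glow u p l m
              * (gup u m t * covOmega gup glow ω u t q r))
            - ∑ m, gup u p m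
              * (christoffel gup glow u t l m * covOmega gup glow ω u t q r)) := by
          refine Finset.sum_congr rfl fun t _ => ?_
          rw [sub_mul, neg_mul, Finset.sum_mul, Finset.sum_mul]
          simp only [mul_assoc]
      _ = - ∑ t, ∑ m, christoffel gup glow u p l m
              * (gup u m t * covOmega gup glow ω u t q r)
          - ∑ t, ∑ m, gup u p m
              * (christoffel gup glow u t l m * covOmega gup glow ω u t q r) := by
          rw [Finset.sum_sub_distrib, Finset.sum_neg_distrib]
      _ = _ := by
          congr 1
          exact Finset.sum_comm
  have hL : ∑ t, gup u p t * covCovOmega gup glow ω u l t q r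
      = ∑ t, gup u p t * pd l (fun v => covOmega gup glow ω v t q r) u
        + ∑ t, ∑ m, gup u p t
            * (christoffel gup glow u q l m * covOmega gup glow ω u t m r)
        + ∑ t, ∑ m, gup u p t
            * (christoffel gup glow u r l m * covOmega gup glow ω u t q m)
        - ∑ t, ∑ m, gup u p t
            * (christoffel gup glow u m l t * covOmega gup glow ω u m q r) := by
    calc ∑ t, gup u p t * covCovOmega gup glow ω u l t q r
        = ∑ t, (gup u p t * pd l (fun v => covOmega gup glow ω v t q r) u
            + ∑ m, gup u p t
                * (christoffel gup glow u q l m * covOmega gup glow ω u t m r)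
            + ∑ m, gup u p t
                * (christoffel gup glow u r l m * covOmega gup glow ω u t q m)
            - ∑ m, gup u p t
                * (christoffel gup glow u m l t * covOmega gup glow ω u m q r)) := by
          refine Finset.sum_congr rfl fun t _ => ?_
          unfold covCovOmega
          rw [mul_sub, mul_add, mul_add, Finset.mul_sum, Finset.mul_sum, Finset.mul_sum]
      _ = _ := by
          rw [Finset.sum_sub_distrib, Finset.sum_add_distrib, Finset.sum_add_distrib]
  have hR1 : ∑ m, christoffel gup glow u p l m
        * ∑ t, gup u m t * covOmega gup glow ω u t q r
      = ∑ t, ∑ m, christoffel gup glow u p l m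
          * (gup u m t * covOmega gup glow ω u t q r) := by
    calc ∑ m, christoffel gup glow u p l m * ∑ t, gup u m t * covOmega gup glow ω u t q r
        = ∑ m, ∑ t, christoffel gup glow u p l m
            * (gup u m t * covOmega gup glow ω u t q r) := by
          exact Finset.sum_congr rfl fun m _ => by rw [Finset.mul_sum]
      _ = _ := Finset.sum_comm
  have hR2 : ∑ m, christoffel gup glow u q l m
        * ∑ t, gup u p t * covOmega gup glow ω u t m r
      = ∑ t, ∑ m, gup u p t
          * (christoffel gup glow u q l m * covOmega gup glow ω u t m r) := by
    calc ∑ m, christoffel gup glow u q l m * ∑ t, gup u p t * covOmega gup glow ω u t m r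
        = ∑ m, ∑ t, christoffel gup glow u q l m
            * (gup u p t * covOmega gup glow ω u t m r) := by
          exact Finset.sum_congr rfl fun m _ => by rw [Finset.mul_sum]
      _ = ∑ t, ∑ m, christoffel gup glow u q l m
            * (gup u p t * covOmega gup glow ω u t m r) := Finset.sum_comm
      _ = _ := by
          exact Finset.sum_congr rfl fun t _ => Finset.sum_congr rfl fun m _ => by ring
  have hR3 : ∑ m, christoffel gup glow u r l m
        * ∑ t, gup u p t * covOmega gup glow ω u t q m
      = ∑ t, ∑ m, gup u p t
          * (christoffel gup glow u r l m * covOmega gup glow ω u t q m) := by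
    calc ∑ m, christoffel gup glow u r l m * ∑ t, gup u p t * covOmega gup glow ω u t q m
        = ∑ m, ∑ t, christoffel gup glow u r l m
            * (gup u p t * covOmega gup glow ω u t q m) := by
          exact Finset.sum_congr rfl fun m _ => by rw [Finset.mul_sum]
      _ = ∑ t, ∑ m, christoffel gup glow u r l m
            * (gup u p t * covOmega gup glow ω u t q m) := Finset.sum_comm
      _ = _ := by
          exact Finset.sum_congr rfl fun t _ => Finset.sum_congr rfl fun m _ => by ring
  rw [hL, hpd, Finset.sum_add_distrib, hpg, hR1, hR2, hR3]
  ring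

lemma nablaA_zero (hU : IsOpen U)
    (hglow : ∀ i j, ContDiffOn ℝ ∞E (fun u => glow u i j) U)
    (hgup : ∀ i j, ContDiffOn ℝ ∞E (fun u => gup u i j) U)
    (hω : ∀ i j, ContDiffOn ℝ ∞E (fun u => ω u i j) U)
    (hsym : ∀ u ∈ U, ∀ i j, glow u i j = glow u j i)
    (hinv : ∀ u ∈ U, ∀ i j, ∑ s, gup u i s * glow u s j = if i = j then (1:ℝ) else 0)
    (hinv' : ∀ u ∈ U, ∀ i j, ∑ s, glow u i s * gup u s j = if i = j then (1:ℝ) else 0)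
    (hcond : ∀ u ∈ U, ∀ i j k : Fin n,
      ∑ s, gup u i s * covOmega gup glow ω u s j k
        + ∑ s, gup u j s * covOmega gup glow ω u s i k = 0)
    {u : Fin n → ℝ} (hu : u ∈ U) (l p q r : Fin n) :
    ∑ t, gup u p t * covCovOmega gup glow ω u l t q r
      + ∑ t, gup u q t * covCovOmega gup glow ω u l t p r = 0 := by
  rw [covCov_contract hU hglow hgup hω hsym hinv hinv' hu l p q r,
    covCov_contract hU hglow hgup hω hsym hinv hinv' hu l q p r]
  have dA : ∀ x y z : Fin n, DifferentiableAt ℝ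
      (fun v => ∑ t, gup v x t * covOmega gup glow ω v t y z) u := fun x y z =>
    DifferentiableAt.fun_sum fun t _ => (diffAt hU (hgup x t) hu).fun_mul
      (diffAt hU (covOmega_contDiffOn hU hglow hgup hω t y z) hu)
  have hw : pd l (fun v => ∑ t, gup v p t * covOmega gup glow ω v t q r) u
      + pd l (fun v => ∑ t, gup v q t * covOmega gup glow ω v t p r) u = 0 := by
    have h0 : pd l (fun v => (∑ t, gup v p t * covOmega gup glow ω v t q r)
        + (∑ t, gup v q t * covOmega gup glow ω v t p r)) u = 0 := by
      rw [pd_congr hU hu (g := fun _ => (0:ℝ)) (fun v hv => hcond v hv p q r) l, pd_const]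
    rw [pd_add (dA p q r) (dA q p r) l] at h0
    exact h0
  have hx : ∑ m, christoffel gup glow u p l m
        * ∑ t, gup u m t * covOmega gup glow ω u t q r
      + ∑ m, christoffel gup glow u p l m
        * ∑ t, gup u q t * covOmega gup glow ω u t m r = 0 := by
    rw [← Finset.sum_add_distrib]
    apply Finset.sum_eq_zero
    intro m _
    rw [← mul_add, hcond u hu m q r]
    ring
  have hy : ∑ m, christoffel gup glow u q l m
        * ∑ t, gup u p t * covOmega gup glow ω u t m r
      + ∑ m, christoffel gup glow u q l m
        * ∑ t, gup u m t * covOmega gup glow ω u t p r = 0 := by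
    rw [← Finset.sum_add_distrib]
    apply Finset.sum_eq_zero
    intro m _
    rw [← mul_add, hcond u hu p m r]
    ring
  have hz : ∑ m, christoffel gup glow u r l m
        * ∑ t, gup u p t * covOmega gup glow ω u t q m
      + ∑ m, christoffel gup glow u r l m
        * ∑ t, gup u q t * covOmega gup glow ω u t p m = 0 := by
    rw [← Finset.sum_add_distrib]
    apply Finset.sum_eq_zero
    intro m _
    rw [← mul_add, hcond u hu p q m]
    ring
  linarith
lemma invert_zero
    (hinv' : ∀ u ∈ U, ∀ i j, ∑ s, glow u i s * gup u s j = if i = j then (1:ℝ) else 0)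
    {u : Fin n → ℝ} (hu : u ∈ U) (f : Fin n → ℝ)
    (h : ∀ a, ∑ l, gup u a l * f l = 0) (l : Fin n) : f l = 0 := by
  have key : f l = ∑ a, glow u l a * ∑ m, gup u a m * f m := by
    calc f l = ∑ m, (if l = m then (1:ℝ) else 0) * f m := by simp
      _ = ∑ m, (∑ a, glow u l a * gup u a m) * f m := by
          refine Finset.sum_congr rfl fun m _ => ?_
          rw [hinv' u hu l m]
      _ = ∑ m, ∑ a, glow u l a * (gup u a m * f m) := by
          refine Finset.sum_congr rfl fun m _ => ?_
          rw [Finset.sum_mul]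
          exact Finset.sum_congr rfl fun a _ => by ring
      _ = ∑ a, ∑ m, glow u l a * (gup u a m * f m) := Finset.sum_comm
      _ = ∑ a, glow u l a * ∑ m, gup u a m * f m := by
          refine Finset.sum_congr rfl fun a _ => ?_
          rw [Finset.mul_sum]
  rw [key]
  apply Finset.sum_eq_zero
  intro a _
  rw [h a, mul_zero]

lemma four_tensor_zero (D : Fin n → Fin n → Fin n → Fin n → ℝ)
    (hsym12 : ∀ a b x y, D a b x y = D b a x y)
    (hanti23 : ∀ a b x y, D a b x y = - D a x b y) (a b x y : Fin n) : D a b x y = 0 := by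
  have h : D a b x y = - D a b x y := by
    calc D a b x y = D b a x y := hsym12 a b x y
      _ = - D b x a y := hanti23 b a x y
      _ = - D x b a y := by rw [hsym12 b x a y]
      _ = D x a b y := by rw [hanti23 x b a y]; ring
      _ = D a x b y := hsym12 x a b y
      _ = - D a b x y := by have := hanti23 a b x y; linarith
  linarith

/-- Ferapontov–Mokhov: for a flat metric, the condition `∇^i ω^{jk} + ∇^j ω^{ik} = 0`
implies `∇_s ∇_k ω^{ij} = 0`. -/
theorem ferapontov_mokhov_corollary {n : ℕ} (U : Set (Fin n → ℝ)) (hU : IsOpen U)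
    (gup glow ω : (Fin n → ℝ) → Fin n → Fin n → ℝ)
    (hglow : ∀ i j, ContDiffOn ℝ (⊤ : ℕ∞) (fun u => glow u i j) U)
    (hgup : ∀ i j, ContDiffOn ℝ (⊤ : ℕ∞) (fun u => gup u i j) U)
    (hω : ∀ i j, ContDiffOn ℝ (⊤ : ℕ∞) (fun u => ω u i j) U)
    (hsym : ∀ u ∈ U, ∀ i j, glow u i j = glow u j i)
    (hinv : ∀ u ∈ U, ∀ i j, ∑ s, gup u i s * glow u s j = if i = j then (1:ℝ) else 0)
    (hinv' : ∀ u ∈ U, ∀ i j, ∑ s, glow u i s * gup u s j = if i = j then (1:ℝ) else 0)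
    (hskew : ∀ u ∈ U, ∀ i j, ω u i j = - ω u j i)
    -- flatness: vanishing Riemann curvature R^l_{ijk}
    (hflat : ∀ u ∈ U, ∀ l i j k : Fin n,
      pd j (fun v => christoffel gup glow v l i k) u
        - pd k (fun v => christoffel gup glow v l i j) u
        + ∑ s, (christoffel gup glow u l j s * christoffel gup glow u s i k
              - christoffel gup glow u l k s * christoffel gup glow u s i j) = 0)
    -- ∇^i ω^{jk} + ∇^j ω^{ik} = 0
    (hcond : ∀ u ∈ U, ∀ i j k : Fin n,
      ∑ s, gup u i s * covOmega gup glow ω u s j k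
        + ∑ s, gup u j s * covOmega gup glow ω u s i k = 0) :
    ∀ u ∈ U, ∀ s k i j : Fin n, covCovOmega gup glow ω u s k i j = 0 := by
  intro u hu s k i j
  have hglow' : ∀ i j, ContDiffOn ℝ ∞E (fun u => glow u i j) U :=
    fun i j => (hglow i j).of_le (by simp)
  have hgup' : ∀ i j, ContDiffOn ℝ ∞E (fun u => gup u i j) U :=
    fun i j => (hgup i j).of_le (by simp)
  have hω' : ∀ i j, ContDiffOn ℝ ∞E (fun u => ω u i j) U :=
    fun i j => (hω i j).of_le (by simp)
  have hCC : ∀ a b x y : Fin n, covCovOmega gup glow ω u a b x y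
      = covCovOmega gup glow ω u b a x y := fun a b x y =>
    ricci hU hglow' hgup' hω' hsym hflat hu a b x y
  have hNA : ∀ l p q r : Fin n, ∑ t, gup u p t * covCovOmega gup glow ω u l t q r
      + ∑ t, gup u q t * covCovOmega gup glow ω u l t p r = 0 := fun l p q r =>
    nablaA_zero hU hglow' hgup' hω' hsym hinv hinv' hcond hu l p q r
  have hD0 : ∀ a b x y : Fin n,
      ∑ l, gup u a l * ∑ m, gup u b m * covCovOmega gup glow ω u l m x y = 0 := by
    have hsym12 : ∀ a b x y : Fin n,
        ∑ l, gup u a l * ∑ m, gup u b m * covCovOmega gup glow ω u l m x y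
        = ∑ l, gup u b l * ∑ m, gup u a m * covCovOmega gup glow ω u l m x y := by
      intro a b x y
      calc ∑ l, gup u a l * ∑ m, gup u b m * covCovOmega gup glow ω u l m x y
          = ∑ l, ∑ m, gup u a l * (gup u b m * covCovOmega gup glow ω u l m x y) := by
            exact Finset.sum_congr rfl fun l _ => by rw [Finset.mul_sum]
        _ = ∑ m, ∑ l, gup u a l * (gup u b m * covCovOmega gup glow ω u l m x y) :=
            Finset.sum_comm
        _ = ∑ m, gup u b m * ∑ l, gup u a l * covCovOmega gup glow ω u l m x y := by
            refine Finset.sum_congr rfl fun m _ => ?_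
            rw [Finset.mul_sum]
            exact Finset.sum_congr rfl fun l _ => by ring
        _ = ∑ l, gup u b l * ∑ m, gup u a m * covCovOmega gup glow ω u l m x y := by
            refine Finset.sum_congr rfl fun l _ => ?_
            congr 1
            exact Finset.sum_congr rfl fun m _ => by rw [hCC m l x y]
    have hanti23 : ∀ a b x y : Fin n,
        ∑ l, gup u a l * ∑ m, gup u b m * covCovOmega gup glow ω u l m x y
        = - ∑ l, gup u a l * ∑ m, gup u x m * covCovOmega gup glow ω u l m b y := by
      intro a b x y
      have h0 : (∑ l, gup u a l * ∑ m, gup u b m * covCovOmega gup glow ω u l m x y)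
          + (∑ l, gup u a l * ∑ m, gup u x m * covCovOmega gup glow ω u l m b y) = 0 := by
        rw [← Finset.sum_add_distrib]
        apply Finset.sum_eq_zero
        intro l _
        rw [← mul_add, hNA l b x y, mul_zero]
      linarith
    exact four_tensor_zero
      (fun a b x y => ∑ l, gup u a l * ∑ m, gup u b m * covCovOmega gup glow ω u l m x y)
      hsym12 hanti23
  have hhalf : ∀ l b : Fin n,
      ∑ m, gup u b m * covCovOmega gup glow ω u l m i j = 0 := by
    intro l b
    exact invert_zero hinv' hu
      (fun l => ∑ m, gup u b m * covCovOmega gup glow ω u l m i j)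
      (fun a => hD0 a b i j) l
  exact invert_zero hinv' hu (fun m => covCovOmega gup glow ω u s m i j)
    (fun b => hhalf s b) k
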